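/- arXiv:2501.02703 — 9 statements merged into one kernel-verified Lean document; each statement's English description precedes it below -/
import Mathlib

section
/- Let $(V_1, \dots, V_{n+1})$ be an exchangeable random vector of real-valued random variables, and let $T = f(\{V_1, \dots, V_{n+1}\})$ be any real-valued function of the unordered multiset of the values (i.e., $f$ applied to the vector is invariant under permutations of the coordinates). Then $\mathbb{E}\left[\frac{(n+1)\,\mathbf{1}\{V_{n+1} \ge T\}}{1 + \sum_{i=1}^n \mathbf{1}\{V_i \ge T\}}\right] \le 1$. -/
open MeasureTheory Finset

/-- validity of the full conformal e-value with a
permutation-invariant data-dependent threshold. -/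
theorem stmt1 {Ω : Type*} [MeasurableSpace Ω] (μ : Measure Ω) [IsProbabilityMeasure μ]
    (n : ℕ) (V : Ω → Fin (n + 1) → ℝ) (hV : Measurable V)
    (hexch : ∀ π : Equiv.Perm (Fin (n + 1)),
      Measure.map (fun ω => V ω ∘ π) μ = Measure.map V μ)
    (f : (Fin (n + 1) → ℝ) → ℝ) (hf : Measurable f)
    (hinv : ∀ (π : Equiv.Perm (Fin (n + 1))) (v : Fin (n + 1) → ℝ), f (v ∘ π) = f v) :
    ∫ ω, ((n + 1 : ℝ) * (if f (V ω) ≤ V ω (Fin.last n) then (1 : ℝ) else 0)) /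
        (1 + ∑ i : Fin n, (if f (V ω) ≤ V ω i.castSucc then (1 : ℝ) else 0)) ∂μ ≤ 1 := by
  classical
  set ind : (Fin (n+1) → ℝ) → Fin (n+1) → ℝ :=
    fun v i => if f v ≤ v i then (1:ℝ) else 0 with hind
  set S : (Fin (n+1) → ℝ) → ℝ := fun v => ∑ i, ind v i with hS
  set g : Fin (n+1) → (Fin (n+1) → ℝ) → ℝ :=
    fun k v => ((n:ℝ)+1) * ind v k / S v with hg
  have hind_nonneg : ∀ v i, 0 ≤ ind v i := by
    intro v i; simp only [hind]; split <;> norm_num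
  have hS_nonneg : ∀ v, 0 ≤ S v := fun v => Finset.sum_nonneg fun i _ => hind_nonneg v i
  have hg_nonneg : ∀ k v, 0 ≤ g k v := by
    intro k v
    exact div_nonneg (mul_nonneg (by positivity) (hind_nonneg v k)) (hS_nonneg v)
  have hg_le : ∀ k v, g k v ≤ (n:ℝ)+1 := by
    intro k v
    simp only [hg]
    by_cases h : f v ≤ v k
    · have h1 : ind v k = 1 := by simp [hind, h]
      have hS1 : (1:ℝ) ≤ S v := by
        rw [← h1]
        exact Finset.single_le_sum (fun i _ => hind_nonneg v i) (Finset.mem_univ k)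
      rw [h1, mul_one]
      exact div_le_self (by positivity) hS1
    · have h1 : ind v k = 0 := by simp [hind, h]
      rw [h1, mul_zero, zero_div]
      positivity
  have hmeas_ind : ∀ i, Measurable (fun v => ind v i) := by
    intro i
    exact Measurable.ite (measurableSet_le hf (measurable_pi_apply i))
      measurable_const measurable_const
  have hmeas_S : Measurable S := Finset.measurable_sum _ fun i _ => hmeas_ind i
  have hmeas_g : ∀ k, Measurable (g k) := fun k =>
    (measurable_const.mul (hmeas_ind k)).div hmeas_S
  have hint : ∀ k, Integrable (fun ω => g k (V ω)) μ := by
    intro k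
    refine ⟨((hmeas_g k).comp hV).aestronglyMeasurable, ?_⟩
    apply HasFiniteIntegral.of_bounded (C := (n:ℝ)+1)
    filter_upwards with ω
    rw [Real.norm_eq_abs, abs_of_nonneg (hg_nonneg _ _)]
    exact hg_le _ _
  -- pointwise identification of the integrand with g (last n)
  have hpt : ∀ v : Fin (n+1) → ℝ,
      ((n + 1 : ℝ) * (if f v ≤ v (Fin.last n) then (1 : ℝ) else 0)) /
        (1 + ∑ i : Fin n, (if f v ≤ v i.castSucc then (1 : ℝ) else 0)) = g (Fin.last n) v := by
    intro v
    by_cases h : f v ≤ v (Fin.last n)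
    · have hden : S v = 1 + ∑ i : Fin n, (if f v ≤ v i.castSucc then (1:ℝ) else 0) := by
        show (∑ i, ind _ i) = _
        simp only [hind]
        rw [Fin.sum_univ_castSucc]
        simp [h, add_comm]
      simp only [hg]
      rw [hden]
    · simp [hg, hind, h]
  -- exchange of coordinates
  have hkey : ∀ k, ∫ ω, g k (V ω) ∂μ = ∫ ω, g (Fin.last n) (V ω) ∂μ := by
    intro k
    set σ : Equiv.Perm (Fin (n+1)) := Equiv.swap k (Fin.last n) with hσdef
    have hσmeas : Measurable (fun ω => V ω ∘ σ) :=
      measurable_pi_iff.2 fun i => (measurable_pi_apply (σ i)).comp hV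
    have hcomp : ∀ v : Fin (n+1) → ℝ, g k (v ∘ σ) = g (Fin.last n) v := by
      intro v
      have hfv : f (v ∘ σ) = f v := hinv σ v
      have hindc : ∀ i, ind (v ∘ σ) i = ind v (σ i) := by
        intro i; simp only [hind]; rw [hfv]; rfl
      have hScomp : S (v ∘ σ) = S v := by
        show (∑ i, ind _ i) = ∑ i, ind v i
        rw [Finset.sum_congr rfl fun i _ => hindc i]
        exact Equiv.sum_comp σ (ind v)
      simp only [hg]
      rw [hScomp, hindc k, hσdef, Equiv.swap_apply_left]
    calc ∫ ω, g k (V ω) ∂μ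
        = ∫ v, g k v ∂(Measure.map V μ) :=
          (integral_map hV.aemeasurable (hmeas_g k).aestronglyMeasurable).symm
      _ = ∫ v, g k v ∂(Measure.map (fun ω => V ω ∘ σ) μ) := by rw [hexch σ]
      _ = ∫ ω, g k (V ω ∘ σ) ∂μ :=
          integral_map hσmeas.aemeasurable (hmeas_g k).aestronglyMeasurable
      _ = ∫ ω, g (Fin.last n) (V ω) ∂μ := by
          exact integral_congr_ae (Filter.Eventually.of_forall fun ω => hcomp (V ω))
  -- sum bound
  have hsum_le : ∀ v, ∑ k, g k v ≤ (n:ℝ)+1 := by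
    intro v
    have : ∑ k, g k v = ((n:ℝ)+1) * S v / S v := by
      simp only [hg]
      rw [← Finset.sum_div, ← Finset.mul_sum]
    rw [this]
    rcases eq_or_ne (S v) 0 with h0 | h0
    · rw [h0]; simp; positivity
    · rw [mul_div_assoc, div_self h0, mul_one]
  have hIsum : Integrable (fun ω => ∑ k, g k (V ω)) μ :=
    integrable_finset_sum _ fun k _ => hint k
  have h1 : ((n:ℝ)+1) * ∫ ω, g (Fin.last n) (V ω) ∂μ = ∫ ω, ∑ k, g k (V ω) ∂μ := by
    rw [integral_finset_sum _ fun k _ => hint k,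
        Finset.sum_congr rfl fun k _ => hkey k, Finset.sum_const]
    simp [nsmul_eq_mul]
  have h2 : ∫ ω, ∑ k, g k (V ω) ∂μ ≤ (n:ℝ)+1 := by
    calc ∫ ω, ∑ k, g k (V ω) ∂μ ≤ ∫ _ω, ((n:ℝ)+1) ∂μ :=
          integral_mono hIsum (integrable_const _) fun ω => hsum_le (V ω)
      _ = (n:ℝ)+1 := by simp
  have hfin : ((n:ℝ)+1) * ∫ ω, g (Fin.last n) (V ω) ∂μ ≤ ((n:ℝ)+1) * 1 := by
    rw [mul_one, h1]; exact h2
  have hI : ∫ ω, g (Fin.last n) (V ω) ∂μ ≤ 1 :=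
    le_of_mul_le_mul_left hfin (by positivity)
  calc ∫ ω, ((n + 1 : ℝ) * (if f (V ω) ≤ V ω (Fin.last n) then (1 : ℝ) else 0)) /
        (1 + ∑ i : Fin n, (if f (V ω) ≤ V ω i.castSucc then (1 : ℝ) else 0)) ∂μ
      = ∫ ω, g (Fin.last n) (V ω) ∂μ :=
        integral_congr_ae (Filter.Eventually.of_forall fun ω => hpt (V ω))
    _ ≤ 1 := hI
end

section
/- Let $(V_1, \dots, V_n, V_{n+1})$ be an exchangeable random vector of real-valued random variables, and define the conformal p-value $p = \frac{1 + \sum_{i=1}^n \mathbf{1}\{V_i \ge V_{n+1}\}}{n+1}$. Then $p$ is super-uniform: for all $t \in [0,1]$, $\mathbb{P}(p \le t) \le t$. -/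
open MeasureTheory Finset
open scoped ENNReal

/-- Count of coordinates `i` with `w j ≤ w i` (including `i = j`). -/
noncomputable def cnt {m : ℕ} (w : Fin m → ℝ) (j : Fin m) : ℕ :=
  (Finset.univ.filter (fun i => w j ≤ w i)).card

lemma cnt_card_le {m k : ℕ} (w : Fin m → ℝ) :
    (Finset.univ.filter (fun j => cnt w j ≤ k)).card ≤ k := by
  set A := Finset.univ.filter (fun j => cnt w j ≤ k) with hA
  rcases A.eq_empty_or_nonempty with h | h
  · simp [h]
  · obtain ⟨j0, hj0, hmin⟩ := A.exists_min_image w h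
    have hsub : A ⊆ Finset.univ.filter (fun i => w j0 ≤ w i) := by
      intro i hi
      exact Finset.mem_filter.2 ⟨Finset.mem_univ _, hmin i hi⟩
    calc A.card ≤ cnt w j0 := Finset.card_le_card hsub
      _ ≤ k := (Finset.mem_filter.1 hj0).2

lemma cnt_measurable {m : ℕ} (j : Fin m) : Measurable (fun w : Fin m → ℝ => cnt w j) := by
  have : (fun w : Fin m → ℝ => cnt w j)
      = fun w => ∑ i : Fin m, if w j ≤ w i then 1 else 0 := by
    funext w
    simp only [cnt]; rw [Finset.card_filter]
  rw [this]
  apply Finset.measurable_sum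
  intro i _
  exact Measurable.ite (measurableSet_le (measurable_pi_apply j) (measurable_pi_apply i))
    measurable_const measurable_const

lemma cnt_comp_perm {m : ℕ} (w : Fin m → ℝ) (π : Equiv.Perm (Fin m)) (j : Fin m) :
    cnt (w ∘ π) j = cnt w (π j) := by
  unfold cnt
  rw [Finset.card_filter, Finset.card_filter]
  exact Equiv.sum_comp π (fun i => if w (π j) ≤ w i then 1 else 0)

/-- the full conformal p-value is super-uniform under exchangeability. -/
theorem stmt2 {Ω : Type*} [MeasurableSpace Ω] (μ : Measure Ω) [IsProbabilityMeasure μ]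
    (n : ℕ) (V : Ω → Fin (n + 1) → ℝ) (hV : Measurable V)
    (hexch : ∀ π : Equiv.Perm (Fin (n + 1)),
      Measure.map (fun ω => V ω ∘ π) μ = Measure.map V μ)
    (t : ℝ) (ht0 : 0 ≤ t) (ht1 : t ≤ 1) :
    μ {ω | (1 + ∑ i : Fin n, (if V ω (Fin.last n) ≤ V ω i.castSucc then (1 : ℝ) else 0))
        / (n + 1 : ℝ) ≤ t} ≤ ENNReal.ofReal t := by
  set k : ℕ := Nat.floor (t * (n + 1)) with hk
  have htn : (0:ℝ) ≤ t * (n + 1) := by positivity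
  have hkle : (k : ℝ) ≤ t * (n + 1) := Nat.floor_le htn
  -- events
  set E : Fin (n + 1) → Set Ω := fun j => {ω | cnt (V ω) j ≤ k} with hE
  have hEmeas : ∀ j, MeasurableSet (E j) := by
    intro j
    have : E j = V ⁻¹' {w | cnt w j ≤ k} := rfl
    rw [this]
    exact hV ((cnt_measurable j) measurableSet_Iic)
  -- the original set is contained in E (last n)
  have hsub : {ω | (1 + ∑ i : Fin n, (if V ω (Fin.last n) ≤ V ω i.castSucc then (1 : ℝ) else 0))
      / (n + 1 : ℝ) ≤ t} ⊆ E (Fin.last n) := by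
    intro ω hω
    simp only [Set.mem_setOf_eq] at hω ⊢
    set Sn : ℕ := ∑ i : Fin n, if V ω (Fin.last n) ≤ V ω i.castSucc then 1 else 0 with hSn
    have hSr : (∑ i : Fin n, (if V ω (Fin.last n) ≤ V ω i.castSucc then (1 : ℝ) else 0))
        = (Sn : ℝ) := by
      rw [hSn]
      push_cast
      rfl
    have hcnt : cnt (V ω) (Fin.last n) = Sn + 1 := by
      unfold cnt
      rw [Finset.card_filter, Fin.sum_univ_castSucc]
      simp [hSn]
    have hpos : (0:ℝ) < (n : ℝ) + 1 := by positivity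
    rw [hSr, div_le_iff₀ hpos] at hω
    have : ((cnt (V ω) (Fin.last n) : ℝ)) ≤ t * (n + 1) := by
      rw [hcnt]
      push_cast
      linarith
    exact Nat.le_floor this
  -- exchangeability: all E j have the same measure
  have hsame : ∀ j, μ (E j) = μ (E (Fin.last n)) := by
    intro j
    set π : Equiv.Perm (Fin (n + 1)) := Equiv.swap (Fin.last n) j with hπ
    have hSmeas : MeasurableSet {w : Fin (n + 1) → ℝ | cnt w (Fin.last n) ≤ k} :=
      (cnt_measurable (Fin.last n)) measurableSet_Iic
    have hVπ : Measurable (fun ω => V ω ∘ π) := by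
      apply measurable_pi_iff.2
      intro i
      exact (measurable_pi_apply (π i)).comp hV
    have h1 : μ (E (Fin.last n)) = Measure.map V μ {w | cnt w (Fin.last n) ≤ k} := by
      rw [Measure.map_apply hV hSmeas]; rfl
    have h2 : Measure.map V μ {w | cnt w (Fin.last n) ≤ k}
        = μ ((fun ω => V ω ∘ π) ⁻¹' {w | cnt w (Fin.last n) ≤ k}) := by
      rw [← hexch π, Measure.map_apply hVπ hSmeas]
    have h3 : ((fun ω => V ω ∘ π) ⁻¹' {w | cnt w (Fin.last n) ≤ k}) = E j := by
      ext ω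
      simp only [Set.mem_preimage, Set.mem_setOf_eq, hE]
      rw [cnt_comp_perm]
      have : π (Fin.last n) = j := Equiv.swap_apply_left _ _
      rw [this]
    rw [h1, h2, h3]
  -- sum of measures bound
  have hsum : ∑ j : Fin (n + 1), μ (E j) ≤ (k : ℝ≥0∞) := by
    have h1 : ∑ j : Fin (n + 1), μ (E j)
        = ∫⁻ ω, (∑ j : Fin (n + 1), (E j).indicator (fun _ => (1:ℝ≥0∞)) ω) ∂μ := by
      rw [lintegral_finset_sum _ (fun j _ =>
        (measurable_const.indicator (hEmeas j)))]
      congr 1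
      funext j
      rw [lintegral_indicator (hEmeas j)]
      simp
    rw [h1]
    calc ∫⁻ ω, (∑ j : Fin (n + 1), (E j).indicator (fun _ => (1:ℝ≥0∞)) ω) ∂μ
        ≤ ∫⁻ _, (k : ℝ≥0∞) ∂μ := by
          apply lintegral_mono
          intro ω
          dsimp only
          have : ∑ j : Fin (n + 1), (E j).indicator (fun _ => (1:ℝ≥0∞)) ω
              = ((Finset.univ.filter (fun j => cnt (V ω) j ≤ k)).card : ℝ≥0∞) := by
            rw [Finset.card_filter]
            push_cast
            congr 1
            funext j
            simp [Set.indicator_apply, hE, Set.mem_setOf_eq]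
          rw [this]
          exact_mod_cast Nat.cast_le.2 (cnt_card_le (V ω))
      _ = (k : ℝ≥0∞) := by simp
  have hconst : ∑ j : Fin (n + 1), μ (E j) = (n + 1 : ℝ≥0∞) * μ (E (Fin.last n)) := by
    rw [Finset.sum_congr rfl (fun j _ => hsame j)]
    simp [mul_comm]
  have hmain : (n + 1 : ℝ≥0∞) * μ (E (Fin.last n)) ≤ (k : ℝ≥0∞) := hconst ▸ hsum
  have hfin : μ (E (Fin.last n)) ≤ ENNReal.ofReal t := by
    have hne : ((n : ℝ≥0∞) + 1) ≠ 0 := by simp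
    have hnt : ((n : ℝ≥0∞) + 1) ≠ ⊤ := by simp
    have hdiv : μ (E (Fin.last n)) ≤ (k : ℝ≥0∞) / ((n:ℝ≥0∞) + 1) := by
      rw [ENNReal.le_div_iff_mul_le (Or.inl hne) (Or.inl hnt), mul_comm]
      exact hmain
    refine hdiv.trans ?_
    rw [ENNReal.div_le_iff hne hnt]
    have : ENNReal.ofReal t * ((n:ℝ≥0∞) + 1) = ENNReal.ofReal (t * (n + 1)) := by
      rw [ENNReal.ofReal_mul ht0]
      congr 1
      rw [ENNReal.ofReal_add (by positivity) zero_le_one]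
      simp [ENNReal.ofReal_natCast]
    rw [this, ← ENNReal.ofReal_natCast k]
    exact ENNReal.ofReal_le_ofReal hkle
  exact (μ.mono hsub).trans hfin
end

section
/- Let $e_1, \dots, e_m$ be nonnegative random variables with $\mathbb{E}[e_j] \le 1$ for every $j$ in a subset $\mathcal{H}_0 \subseteq \{1, \dots, m\}$, and let $\alpha \in (0,1)$. Define the e-BH rejection set $\mathcal{R} = \{j : e_j \ge m/(\alpha k^*)\}$ where $k^* = \max\{k \in \{0, 1, \dots, m\} : \#\{j : e_j \ge m/(\alpha k)\} \ge k\}$ (with the convention that the condition holds vacuously for $k=0$). Then the false discovery rate satisfies $\mathrm{FDR} := \mathbb{E}\left[\frac{\#(\mathcal{H}_0 \cap \mathcal{R})}{\max(|\mathcal{R}|, 1)}\right] \le \frac{|\mathcal{H}_0|}{m}\,\alpha$. -/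
open MeasureTheory Finset
open scoped Classical

/-- The largest `k ∈ {0, …, m}` such that at least `k` of the e-values exceed
`m / (α k)` (the condition holds vacuously for `k = 0`). -/
noncomputable def ebhK (m : ℕ) (α : ℝ) (e : Fin m → ℝ) : ℕ :=
  sSup {k | k ≤ m ∧ k ≤ (Finset.univ.filter (fun j => (m : ℝ) / (α * k) ≤ e j)).card}

/-- The e-BH rejection set at level `α`: `{j : e_j ≥ m / (α k*)}`, empty if `k* = 0`. -/
noncomputable def ebhR (m : ℕ) (α : ℝ) (e : Fin m → ℝ) : Finset (Fin m) :=
  if ebhK m α e = 0 then ∅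
  else Finset.univ.filter (fun j => (m : ℝ) / (α * (ebhK m α e : ℝ)) ≤ e j)

/-!
Every hypothesis rejected by e-BH has `e_j ≥ m / (α k*)` and there are at least `k*` rejections,
so each true null contributes at most `α e_j / m` to the false discovery proportion. Hence
`FDP ≤ ∑_{j ∈ H₀} α e_j / m` pointwise, and taking expectations with `𝔼[e_j] ≤ 1` gives the bound.
-/

lemma ebhK_spec (m : ℕ) (α : ℝ) (e : Fin m → ℝ) :
    ebhK m α e ≤ m ∧
      ebhK m α e ≤ (univ.filter fun j => (m : ℝ) / (α * ebhK m α e) ≤ e j).card :=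
  Nat.sSup_mem (s := {k | k ≤ m ∧ k ≤ (univ.filter fun j => (m : ℝ) / (α * k) ≤ e j).card})
    ⟨0, Nat.zero_le m, Nat.zero_le _⟩ ⟨m, fun _ hk => hk.1⟩

lemma inv_card_ebhR_le_of_mem {m : ℕ} {α : ℝ} (hα : 0 < α) {e : Fin m → ℝ} {j : Fin m}
    (hj : j ∈ ebhR m α e) : ((ebhR m α e).card : ℝ)⁻¹ ≤ α / m * e j := by
  unfold ebhR at hj ⊢
  split_ifs at hj ⊢ with hk
  · simp at hj
  set k := ebhK m α e
  obtain ⟨hkm, hkR⟩ := ebhK_spec m α e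
  have hk : (0 : ℝ) < k := by exact_mod_cast Nat.pos_of_ne_zero hk
  have hm : (0 : ℝ) < m := hk.trans_le (by exact_mod_cast hkm)
  calc _ ≤ (k : ℝ)⁻¹ := inv_anti₀ hk (by exact_mod_cast hkR)
    _ = α / m * (m / (α * k)) := by field_simp
    _ ≤ α / m * e j := by gcongr; exact (mem_filter.mp hj).2

lemma fdp_ebhR_le {m : ℕ} {α : ℝ} (hα : 0 < α) {e : Fin m → ℝ} (he0 : ∀ j, 0 ≤ e j)
    (H0 : Finset (Fin m)) :
    ((H0 ∩ ebhR m α e).card : ℝ) / max ((ebhR m α e).card : ℝ) 1 ≤ ∑ j ∈ H0, α / m * e j := by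
  rw [← filter_mem_eq_inter, card_filter, Nat.cast_sum, sum_div]
  refine sum_le_sum fun j _ => ?_
  split_ifs with hj
  · have hR : (1 : ℝ) ≤ (ebhR m α e).card := by exact_mod_cast card_pos.mpr ⟨j, hj⟩
    rw [Nat.cast_one, max_eq_left hR, one_div]
    exact inv_card_ebhR_le_of_mem hα hj
  · simp only [Nat.cast_zero, zero_div]
    exact mul_nonneg (by positivity) (he0 j)

theorem stmt4_general {Ω : Type*} [MeasurableSpace Ω] (μ : Measure Ω)
    (m : ℕ) (e : Fin m → Ω → ℝ) (he0 : ∀ j ω, 0 ≤ e j ω)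
    (hInt : ∀ j, Integrable (e j) μ)
    (H0 : Finset (Fin m)) (hE : ∀ j ∈ H0, ∫ ω, e j ω ∂μ ≤ 1)
    (α : ℝ) (hα : 0 < α) :
    ∫ ω, ((H0 ∩ ebhR m α (fun j => e j ω)).card : ℝ)
        / max ((ebhR m α (fun j => e j ω)).card : ℝ) 1 ∂μ
      ≤ (H0.card : ℝ) / m * α := by
  have hfdp_nonneg : 0 ≤ᵐ[μ] fun ω => ((H0 ∩ ebhR m α (fun j => e j ω)).card : ℝ)
      / max ((ebhR m α (fun j => e j ω)).card : ℝ) 1 :=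
    ae_of_all _ fun ω => by positivity
  calc _ ≤ ∫ ω, ∑ j ∈ H0, α / m * e j ω ∂μ :=
        integral_mono_of_nonneg hfdp_nonneg
          (integrable_finsetSum _ fun j _ => (hInt j).const_mul _)
          (ae_of_all _ fun ω => fdp_ebhR_le hα (fun j => he0 j ω) H0)
    _ = ∑ j ∈ H0, α / m * ∫ ω, e j ω ∂μ := by
        rw [integral_finsetSum _ fun j _ => (hInt j).const_mul _]
        simp only [integral_const_mul]
    _ ≤ ∑ _j ∈ H0, α / m * 1 := sum_le_sum fun j hj => by gcongr; exact hE j hj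
    _ = (H0.card : ℝ) / m * α := by rw [sum_const, nsmul_eq_mul]; ring

/-- the e-BH procedure applied to e-values controls the FDR at level
`(|H0|/m) α`. -/
theorem stmt4 {Ω : Type*} [MeasurableSpace Ω] (μ : Measure Ω) [IsProbabilityMeasure μ]
    (m : ℕ) (e : Fin m → Ω → ℝ) (he0 : ∀ j ω, 0 ≤ e j ω)
    (hmeas : ∀ j, Measurable (e j)) (hInt : ∀ j, Integrable (e j) μ)
    (H0 : Finset (Fin m)) (hE : ∀ j ∈ H0, ∫ ω, e j ω ∂μ ≤ 1)
    (α : ℝ) (hα : 0 < α) (hα1 : α < 1) :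
    ∫ ω, ((H0 ∩ ebhR m α (fun j => e j ω)).card : ℝ)
        / max ((ebhR m α (fun j => e j ω)).card : ℝ) 1 ∂μ
      ≤ (H0.card : ℝ) / m * α :=
  stmt4_general μ m e he0 hInt H0 hE α hα
end

section
/- Let $e_1, \dots, e_m$ be nonnegative random variables satisfying the compound e-value condition $\sum_{j \in \mathcal{H}_0} \mathbb{E}[e_j] \le m$ for a subset $\mathcal{H}_0 \subseteq \{1, \dots, m\}$. Then the e-BH procedure applied at level $\alpha \in (0,1)$ produces a rejection set $\mathcal{R}$ with $\mathbb{E}\left[\frac{\#(\mathcal{H}_0 \cap \mathcal{R})}{\max(|\mathcal{R}|,1)}\right] \le \alpha$. -/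
open MeasureTheory Finset
open scoped Classical

lemma ebhK_mem (m : ℕ) (α : ℝ) (e : Fin m → ℝ) :
    ebhK m α e ≤ m ∧
      ebhK m α e ≤
        (Finset.univ.filter (fun j => (m : ℝ) / (α * (ebhK m α e : ℕ)) ≤ e j)).card := by
  have h0 : (0 : ℕ) ∈
      {k | k ≤ m ∧ k ≤ (Finset.univ.filter (fun j => (m : ℝ) / (α * k) ≤ e j)).card} := by
    simp
  have hbdd : BddAbove
      {k | k ≤ m ∧ k ≤ (Finset.univ.filter (fun j => (m : ℝ) / (α * k) ≤ e j)).card} :=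
    ⟨m, fun k hk => hk.1⟩
  exact Nat.sSup_mem ⟨0, h0⟩ hbdd

lemma pointwise_bound (m : ℕ) (hm : 0 < m) (α : ℝ) (hα : 0 < α) (e : Fin m → ℝ)
    (he : ∀ j, 0 ≤ e j) (H0 : Finset (Fin m)) :
    ((H0 ∩ ebhR m α e).card : ℝ) / max ((ebhR m α e).card : ℝ) 1
      ≤ (α / m) * ∑ j ∈ H0, e j := by
  have hsum : 0 ≤ ∑ j ∈ H0, e j := Finset.sum_nonneg fun j _ => he j
  have hrhs : 0 ≤ (α / m) * ∑ j ∈ H0, e j := by positivity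
  by_cases hk : ebhK m α e = 0
  · simpa [ebhR, hk] using hrhs
  · set k := ebhK m α e with hkdef
    have hk1 : 1 ≤ k := Nat.one_le_iff_ne_zero.mpr hk
    have hmem := ebhK_mem m α e
    rw [ebhR, if_neg hk]
    set R := Finset.univ.filter (fun j => (m : ℝ) / (α * (k : ℝ)) ≤ e j) with hR
    have hcard : (k : ℝ) ≤ (R.card : ℝ) := by exact_mod_cast hmem.2
    have hk0 : (0 : ℝ) < (k : ℝ) := by exact_mod_cast hk1
    have hmax : max ((R.card : ℝ)) 1 = (R.card : ℝ) := by
      apply max_eq_left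
      have hk1' : (1:ℝ) ≤ (k:ℝ) := by exact_mod_cast hk1
      linarith
    rw [hmax]
    have step1 : ((H0 ∩ R).card : ℝ) / (R.card : ℝ) ≤ ((H0 ∩ R).card : ℝ) / (k : ℝ) := by
      apply div_le_div_of_nonneg_left (by positivity) hk0 hcard
    refine step1.trans ?_
    have step2 : ((H0 ∩ R).card : ℝ) / (k : ℝ) = ∑ j ∈ H0 ∩ R, (1 / (k : ℝ)) := by
      rw [Finset.sum_const, nsmul_eq_mul]
      ring
    rw [step2]
    have step3 : ∑ j ∈ H0 ∩ R, (1 / (k : ℝ)) ≤ ∑ j ∈ H0 ∩ R, (α / m) * e j := by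
      apply Finset.sum_le_sum
      intro j hj
      have hjR : j ∈ R := Finset.mem_of_mem_inter_right hj
      have hje : (m : ℝ) / (α * (k : ℝ)) ≤ e j := by
        simpa [hR] using hjR
      have hm0 : (0 : ℝ) < (m : ℝ) := by exact_mod_cast hm
      rw [div_le_iff₀ (by positivity)] at hje
      rw [div_le_iff₀ hk0]
      rw [div_mul_eq_mul_div, div_mul_eq_mul_div, le_div_iff₀ hm0]
      linarith [hje]
    refine step3.trans ?_
    rw [← Finset.mul_sum]
    apply mul_le_mul_of_nonneg_left _ (by positivity)
    apply Finset.sum_le_sum_of_subset_of_nonneg (Finset.inter_subset_left)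
    intro j _ _
    exact he j

/-- e-BH applied to compound e-values controls the FDR at level α. -/
theorem stmt5 {Ω : Type*} [MeasurableSpace Ω] (μ : Measure Ω) [IsProbabilityMeasure μ]
    (m : ℕ) (e : Fin m → Ω → ℝ) (he0 : ∀ j ω, 0 ≤ e j ω)
    (hmeas : ∀ j, Measurable (e j)) (hInt : ∀ j, Integrable (e j) μ)
    (H0 : Finset (Fin m)) (hE : ∑ j ∈ H0, ∫ ω, e j ω ∂μ ≤ (m : ℝ))
    (α : ℝ) (hα : 0 < α) (hα1 : α < 1) :
    ∫ ω, ((H0 ∩ ebhR m α (fun j => e j ω)).card : ℝ)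
        / max ((ebhR m α (fun j => e j ω)).card : ℝ) 1 ∂μ
      ≤ α := by
  rcases Nat.eq_zero_or_pos m with hm | hm
  · subst hm
    have hH0 : H0 = ∅ := Finset.eq_empty_of_isEmpty H0
    simp [hH0]
    linarith
  · have hint : Integrable (fun ω => (α / m) * ∑ j ∈ H0, e j ω) μ :=
      (integrable_finset_sum _ (fun j _ => hInt j)).const_mul _
    have hmono : ∫ ω, ((H0 ∩ ebhR m α (fun j => e j ω)).card : ℝ)
        / max ((ebhR m α (fun j => e j ω)).card : ℝ) 1 ∂μ
        ≤ ∫ ω, (α / m) * ∑ j ∈ H0, e j ω ∂μ := by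
      apply integral_mono_of_nonneg
      · filter_upwards with ω
        have h1 : (0:ℝ) < max ((ebhR m α (fun j => e j ω)).card : ℝ) 1 :=
          lt_of_lt_of_le one_pos (le_max_right _ _)
        positivity
      · exact hint
      · filter_upwards with ω
        exact pointwise_bound m hm α hα _ (fun j => he0 j ω) H0
    refine hmono.trans ?_
    rw [integral_const_mul, integral_finset_sum _ (fun j _ => hInt j)]
    have hm0 : (0 : ℝ) < (m : ℝ) := by exact_mod_cast hm
    calc (α / m) * ∑ j ∈ H0, ∫ ω, e j ω ∂μ
        ≤ (α / m) * m := by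
          apply mul_le_mul_of_nonneg_left hE (by positivity)
      _ = α := by field_simp
end

section
/- Let $e_1, \dots, e_m \ge 0$ with e-BH rejection set $\mathcal{R}$ at level $\alpha \in (0,1)$, and define boosted values $e_j^b = \frac{m}{\alpha\,|\mathcal{R} \cup \{j\}|}\, b_j$ where $b_j \in \{0, 1\}$ satisfies $b_j = 1$ whenever $e_j \ge \frac{m}{\alpha\,|\mathcal{R}\cup\{j\}|}$. Then $\mathcal{R} \subseteq \mathcal{R}^b$, where $\mathcal{R}^b$ is the e-BH rejection set for $(e_1^b, \dots, e_m^b)$ at level $\alpha$. -/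
open MeasureTheory Finset
open scoped Classical

/-- boosted e-values of the e-BH-CC form dominate the original
e-BH rejection set. -/
theorem stmt8 (m : ℕ) (α : ℝ) (hα : 0 < α) (hα1 : α < 1)
    (e : Fin m → ℝ) (he : ∀ j, 0 ≤ e j)
    (b : Fin m → ℝ) (hb01 : ∀ j, b j = 0 ∨ b j = 1)
    (hb : ∀ j, (m : ℝ) / (α * ((insert j (ebhR m α e)).card : ℝ)) ≤ e j → b j = 1) :
    ebhR m α e ⊆
      ebhR m α (fun j => (m : ℝ) / (α * ((insert j (ebhR m α e)).card : ℝ)) * b j) := by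
  set k := ebhK m α e with hkdef
  by_cases h0 : k = 0
  · intro j hj
    simp only [ebhR, ← hkdef, h0, if_true] at hj
    exact absurd hj (Finset.notMem_empty j)
  · have hkpos : 0 < k := Nat.pos_of_ne_zero h0
    have hkmem : k ≤ m ∧
        k ≤ (Finset.univ.filter (fun j => (m : ℝ) / (α * (k : ℝ)) ≤ e j)).card := by
      have : k ∈ {k | k ≤ m ∧
          k ≤ (Finset.univ.filter (fun j => (m : ℝ) / (α * (k : ℝ)) ≤ e j)).card} := by
        rw [hkdef]
        apply Nat.sSup_mem
        · exact ⟨0, by simp⟩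
        · exact ⟨m, fun x hx => hx.1⟩
      exact this
    set R := ebhR m α e with hRdef
    have hReq : R = Finset.univ.filter (fun j => (m : ℝ) / (α * (k : ℝ)) ≤ e j) := by
      rw [hRdef, ebhR, ← hkdef, if_neg h0]
    have hkR : k ≤ R.card := by rw [hReq]; exact hkmem.2
    have hRcardpos : 0 < R.card := lt_of_lt_of_le hkpos hkR
    have hmpos : 0 < m := lt_of_lt_of_le hkpos hkmem.1
    -- for j ∈ R, the boosted e-value equals m / (α * R.card)
    set e' := fun j => (m : ℝ) / (α * ((insert j R).card : ℝ)) * b j with he'def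
    have hkey : ∀ j ∈ R, e' j = (m : ℝ) / (α * (R.card : ℝ)) := by
      intro j hj
      have hins : insert j R = R := Finset.insert_eq_self.mpr hj
      have hthr : (m : ℝ) / (α * ((insert j R).card : ℝ)) ≤ e j := by
        rw [hins]
        have h1 : (m : ℝ) / (α * (R.card : ℝ)) ≤ (m : ℝ) / (α * (k : ℝ)) := by
          apply div_le_div_of_nonneg_left (by positivity)
            (by positivity)
          have : (k : ℝ) ≤ (R.card : ℝ) := Nat.cast_le.mpr hkR
          nlinarith
        have h2 : (m : ℝ) / (α * (k : ℝ)) ≤ e j := by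
          rw [hReq] at hj
          exact (Finset.mem_filter.mp hj).2
        linarith
      have hb1 : b j = 1 := hb j hthr
      simp [he'def, hb1, hins]
    -- new k*
    set k' := ebhK m α e' with hk'def
    have hk'ge : R.card ≤ k' := by
      rw [hk'def, ebhK]
      apply le_csSup ⟨m, fun x hx => hx.1⟩
      constructor
      · simpa using Finset.card_le_card (Finset.subset_univ R)
      · apply Finset.card_le_card
        intro j hj
        simp only [Finset.mem_filter, Finset.mem_univ, true_and]
        rw [hkey j hj]
    have hk'pos : k' ≠ 0 := by omega
    intro j hj
    rw [ebhR, ← hk'def, if_neg hk'pos, Finset.mem_filter]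
    refine ⟨Finset.mem_univ j, ?_⟩
    show (m : ℝ) / (α * (k' : ℝ)) ≤ e' j
    rw [hkey j hj]
    apply div_le_div_of_nonneg_left (by positivity) (by positivity)
    have : (R.card : ℝ) ≤ (k' : ℝ) := Nat.cast_le.mpr hk'ge
    nlinarith
end

section
/- Let $(Z_1, \dots, Z_n, Z_{n+j})$ be exchangeable conditional on a random element $W$, let $g$ be a measurable score function invariant to permutations of its first $n+1$ arguments and possibly depending on $W$, and set $V_i = g(Z_1,\dots,Z_n,Z_{n+j}; W; Z_i)$. Then $(V_1, \dots, V_n, V_{n+j})$ is exchangeable conditional on $W$, and consequently, for any threshold $T$ that is a permutation-invariant function of $(V_1, \dots, V_n, V_{n+j})$ and $W$, $\mathbb{E}\left[\frac{(n+1)\mathbf{1}\{V_{n+j} \ge T\}}{1 + \sum_{i=1}^n \mathbf{1}\{V_i \ge T\}}\right] \le 1$. -/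
open MeasureTheory Finset

private noncomputable def Ncount {n : ℕ} {𝒲 : Type*} (T : (Fin (n + 1) → ℝ) → 𝒲 → ℝ)
    (p : (Fin (n + 1) → ℝ) × 𝒲) : ℝ :=
  ∑ i, if T p.1 p.2 ≤ p.1 i then (1 : ℝ) else 0

private noncomputable def phi {n : ℕ} {𝒲 : Type*} (T : (Fin (n + 1) → ℝ) → 𝒲 → ℝ)
    (k : Fin (n + 1)) (p : (Fin (n + 1) → ℝ) × 𝒲) : ℝ :=
  (if T p.1 p.2 ≤ p.1 k then (1 : ℝ) else 0) / Ncount T p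

/-- conditionally (on `W`) exchangeable data, scored by a score
function invariant to permutations of its first `n+1` arguments (which may also
depend on `W`), yields scores exchangeable conditional on `W`; consequently the
full conformal e-value with a permutation-invariant threshold is a strict e-value.
(The coordinate `Fin.last n` plays the role of the test point `Z_{n+j}`, and
conditional exchangeability given `W` is formalized as joint distributional
invariance of `(Z ∘ π, W)`.) -/
theorem stmt10 {Ω 𝒵 𝒲 : Type*} [MeasurableSpace Ω] [MeasurableSpace 𝒵] [MeasurableSpace 𝒲]
    (μ : Measure Ω) [IsProbabilityMeasure μ] (n : ℕ)
    (Z : Ω → Fin (n + 1) → 𝒵) (hZ : Measurable Z)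
    (W : Ω → 𝒲) (hW : Measurable W)
    (hexch : ∀ π : Equiv.Perm (Fin (n + 1)),
      Measure.map (fun ω => (Z ω ∘ π, W ω)) μ = Measure.map (fun ω => (Z ω, W ω)) μ)
    (g : (Fin (n + 1) → 𝒵) → 𝒲 → 𝒵 → ℝ)
    (hg : Measurable (fun q : (Fin (n + 1) → 𝒵) × 𝒲 × 𝒵 => g q.1 q.2.1 q.2.2))
    (hginv : ∀ (π : Equiv.Perm (Fin (n + 1))) (z : Fin (n + 1) → 𝒵) (w : 𝒲) (x : 𝒵),
      g (z ∘ π) w x = g z w x)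
    (T : (Fin (n + 1) → ℝ) → 𝒲 → ℝ) (hT : Measurable (Function.uncurry T))
    (hTinv : ∀ (π : Equiv.Perm (Fin (n + 1))) (v : Fin (n + 1) → ℝ) (w : 𝒲),
      T (v ∘ π) w = T v w) :
    (∀ π : Equiv.Perm (Fin (n + 1)),
      Measure.map (fun ω => ((fun i => g (Z ω) (W ω) (Z ω (π i))), W ω)) μ
        = Measure.map (fun ω => ((fun i => g (Z ω) (W ω) (Z ω i)), W ω)) μ) ∧
    ∫ ω, ((n + 1 : ℝ) *
        (if T (fun i => g (Z ω) (W ω) (Z ω i)) (W ω) ≤ g (Z ω) (W ω) (Z ω (Fin.last n))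
          then (1 : ℝ) else 0)) /
        (1 + ∑ i : Fin n,
          (if T (fun i' => g (Z ω) (W ω) (Z ω i')) (W ω) ≤ g (Z ω) (W ω) (Z ω i.castSucc)
            then (1 : ℝ) else 0)) ∂μ ≤ 1 := by
  classical
  have hVmeas : Measurable (fun ω => (fun i => g (Z ω) (W ω) (Z ω i))) := by
    apply measurable_pi_lambda
    intro i
    exact hg.comp (hZ.prodMk (hW.prodMk ((measurable_pi_apply i).comp hZ)))
  set V : Ω → Fin (n + 1) → ℝ := fun ω i => g (Z ω) (W ω) (Z ω i) with hVdef
  -- Part 1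
  have key : ∀ π : Equiv.Perm (Fin (n + 1)),
      Measure.map (fun ω => (V ω ∘ π, W ω)) μ = Measure.map (fun ω => (V ω, W ω)) μ := by
    intro π
    have hΦ : Measurable (fun p : (Fin (n + 1) → 𝒵) × 𝒲 =>
        ((fun i => g p.1 p.2 (p.1 i)), p.2)) := by
      refine Measurable.prodMk ?_ measurable_snd
      apply measurable_pi_lambda
      intro i
      exact hg.comp (measurable_fst.prodMk
        (measurable_snd.prodMk ((measurable_pi_apply i).comp measurable_fst)))
    have hZπ : Measurable (fun ω => (Z ω ∘ π, W ω)) := by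
      exact (measurable_pi_lambda _ fun i => (measurable_pi_apply (π i)).comp hZ).prodMk hW
    have h1 : (fun ω => (V ω ∘ π, W ω))
        = (fun p : (Fin (n + 1) → 𝒵) × 𝒲 => ((fun i => g p.1 p.2 (p.1 i)), p.2))
            ∘ (fun ω => (Z ω ∘ π, W ω)) := by
      funext ω
      simp only [Function.comp_apply]
      refine Prod.ext ?_ rfl
      funext i
      simp only [hVdef, Function.comp_apply]
      exact (hginv π (Z ω) (W ω) (Z ω (π i))).symm
    have h2 : (fun ω => (V ω, W ω))
        = (fun p : (Fin (n + 1) → 𝒵) × 𝒲 => ((fun i => g p.1 p.2 (p.1 i)), p.2))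
            ∘ (fun ω => (Z ω, W ω)) := rfl
    rw [h1, h2, ← Measure.map_map hΦ hZπ, ← Measure.map_map hΦ (hZ.prodMk hW), hexch π]
  refine ⟨fun π => key π, ?_⟩
  -- Part 2
  have hNmeas : Measurable (Ncount T : (Fin (n + 1) → ℝ) × 𝒲 → ℝ) := by
    apply Finset.measurable_sum
    intro i _
    exact Measurable.ite (measurableSet_le hT ((measurable_pi_apply i).comp measurable_fst))
      measurable_const measurable_const
  have hφmeas : ∀ k, Measurable (phi T k : (Fin (n + 1) → ℝ) × 𝒲 → ℝ) := by
    intro k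
    exact (Measurable.ite (measurableSet_le hT ((measurable_pi_apply k).comp measurable_fst))
      measurable_const measurable_const).div hNmeas
  have hN0 : ∀ p : (Fin (n + 1) → ℝ) × 𝒲, 0 ≤ Ncount T p := by
    intro p
    exact Finset.sum_nonneg fun i _ => by positivity
  have hφ0 : ∀ k p, 0 ≤ phi T k p := by
    intro k p
    exact div_nonneg (by positivity) (hN0 p)
  have hφ1 : ∀ k p, phi T k p ≤ 1 := by
    intro k p
    by_cases h : T p.1 p.2 ≤ p.1 k
    · have hge : (1 : ℝ) ≤ Ncount T p := by
        rw [Ncount]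
        calc (1 : ℝ) = (if T p.1 p.2 ≤ p.1 k then (1 : ℝ) else 0) := by rw [if_pos h]
          _ ≤ _ := Finset.single_le_sum (f := fun i => if T p.1 p.2 ≤ p.1 i then (1 : ℝ) else 0)
              (fun i _ => by positivity) (Finset.mem_univ k)
      rw [phi, if_pos h, div_le_one (lt_of_lt_of_le one_pos hge)]
      exact hge
    · simp [phi, h, hN0 p]
  have hint : ∀ k, Integrable (fun ω => phi T k (V ω, W ω)) μ := by
    intro k
    have hm : Measurable fun ω => phi T k (V ω, W ω) := (hφmeas k).comp (hVmeas.prodMk hW)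
    refine (integrable_const (1 : ℝ)).mono' hm.aestronglyMeasurable ?_
    filter_upwards with ω
    rw [Real.norm_eq_abs, abs_of_nonneg (hφ0 k _)]
    exact hφ1 k _
  have heq : ∀ k, ∫ ω, phi T k (V ω, W ω) ∂μ = ∫ ω, phi T (Fin.last n) (V ω, W ω) ∂μ := by
    intro k
    set π := Equiv.swap k (Fin.last n) with hπ
    have hVπ : Measurable (fun ω => (V ω ∘ π, W ω)) :=
      (measurable_pi_lambda _ fun i => (measurable_pi_apply (π i)).comp hVmeas).prodMk hW
    have hpt : ∀ ω, phi T (Fin.last n) (V ω ∘ π, W ω) = phi T k (V ω, W ω) := by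
      intro ω
      have hT' : T (V ω ∘ π) (W ω) = T (V ω) (W ω) := hTinv π _ _
      have hNeq : Ncount T (V ω ∘ π, W ω) = Ncount T (V ω, W ω) := by
        simp only [Ncount, hT', Function.comp_apply]
        exact Equiv.sum_comp π (fun i => if T (V ω) (W ω) ≤ V ω i then (1 : ℝ) else 0)
      have hlast : (V ω ∘ π) (Fin.last n) = V ω k := by
        simp [hπ, Equiv.swap_apply_right]
      simp only [phi]
      rw [hNeq, hT']
      simp only [hlast]
    calc ∫ ω, phi T k (V ω, W ω) ∂μ
        = ∫ ω, phi T (Fin.last n) (V ω ∘ π, W ω) ∂μ := by simp_rw [hpt]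
      _ = ∫ p, phi T (Fin.last n) p ∂(Measure.map (fun ω => (V ω ∘ π, W ω)) μ) :=
          (integral_map hVπ.aemeasurable (hφmeas _).aestronglyMeasurable).symm
      _ = ∫ p, phi T (Fin.last n) p ∂(Measure.map (fun ω => (V ω, W ω)) μ) := by rw [key π]
      _ = ∫ ω, phi T (Fin.last n) (V ω, W ω) ∂μ :=
          integral_map (hVmeas.prodMk hW).aemeasurable (hφmeas _).aestronglyMeasurable
  have hsum : ∑ k : Fin (n + 1), ∫ ω, phi T k (V ω, W ω) ∂μ ≤ 1 := by
    rw [← integral_finset_sum _ (fun k _ => hint k)]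
    have h1 : ∫ _ω, (1 : ℝ) ∂μ = 1 := by simp
    rw [← h1]
    apply integral_mono (integrable_finset_sum _ fun k _ => hint k) (integrable_const 1)
    intro ω
    show ∑ k, phi T k (V ω, W ω) ≤ 1
    simp only [phi, ← Finset.sum_div]
    rcases eq_or_ne (Ncount T (V ω, W ω)) 0 with h | h
    · simp only [Ncount] at h
      rw [Ncount, h]
      simp
    · rw [show (∑ k : Fin (n+1), if T (V ω) (W ω) ≤ V ω k then (1:ℝ) else 0)
          = Ncount T (V ω, W ω) from rfl, div_self h]
  have hpointwise : ∀ ω, ((n + 1 : ℝ) *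
        (if T (fun i => g (Z ω) (W ω) (Z ω i)) (W ω) ≤ g (Z ω) (W ω) (Z ω (Fin.last n))
          then (1 : ℝ) else 0)) /
        (1 + ∑ i : Fin n,
          (if T (fun i' => g (Z ω) (W ω) (Z ω i')) (W ω) ≤ g (Z ω) (W ω) (Z ω i.castSucc)
            then (1 : ℝ) else 0))
      = (n + 1 : ℝ) * phi T (Fin.last n) (V ω, W ω) := by
    intro ω
    show ((n + 1 : ℝ) * (if T (V ω) (W ω) ≤ V ω (Fin.last n) then (1 : ℝ) else 0)) /
        (1 + ∑ i : Fin n, (if T (V ω) (W ω) ≤ V ω i.castSucc then (1 : ℝ) else 0))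
        = (n + 1 : ℝ) * phi T (Fin.last n) (V ω, W ω)
    by_cases h : T (V ω) (W ω) ≤ V ω (Fin.last n)
    · have hN : Ncount T (V ω, W ω)
          = 1 + ∑ i : Fin n, (if T (V ω) (W ω) ≤ V ω i.castSucc then (1 : ℝ) else 0) := by
        rw [Ncount, Fin.sum_univ_castSucc]
        rw [if_pos h]
        ring
      simp only [phi, if_pos h]
      rw [hN, mul_one, mul_one_div]
    · simp only [phi, if_neg h]
      simp
  calc ∫ ω, ((n + 1 : ℝ) *
        (if T (fun i => g (Z ω) (W ω) (Z ω i)) (W ω) ≤ g (Z ω) (W ω) (Z ω (Fin.last n))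
          then (1 : ℝ) else 0)) /
        (1 + ∑ i : Fin n,
          (if T (fun i' => g (Z ω) (W ω) (Z ω i')) (W ω) ≤ g (Z ω) (W ω) (Z ω i.castSucc)
            then (1 : ℝ) else 0)) ∂μ
      = ∫ ω, (n + 1 : ℝ) * phi T (Fin.last n) (V ω, W ω) ∂μ := by simp_rw [hpointwise]
    _ = (n + 1 : ℝ) * ∫ ω, phi T (Fin.last n) (V ω, W ω) ∂μ := integral_const_mul _ _
    _ = ∑ k : Fin (n + 1), ∫ ω, phi T k (V ω, W ω) ∂μ := by
        simp_rw [heq]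
        rw [Finset.sum_const, Finset.card_univ, Fintype.card_fin, nsmul_eq_mul]
        push_cast
        ring
    _ ≤ 1 := hsum
end

section
/- Fix $\alpha \in (0,1)$ and $m \ge 1$. Let $p_1, \dots, p_m \in (0, 1]$, let $\hat{k} = \max\{k : \#\{j : p_j \le \alpha k/m\} \ge k\}$ (with $\hat{k} = 0$ if no such $k$ exists), and define, for each $j$, $e_j = \frac{m}{\alpha \hat{k}} \mathbf{1}\{p_j \le \alpha \hat{k}/m\}$ (with all $e_j = 0$ if $\hat{k} = 0$). Then the e-BH rejection set of $(e_1, \dots, e_m)$ at level $\alpha$ equals the Benjamini–Hochberg rejection set of $(p_1, \dots, p_m)$ at level $\alpha$, namely $\{j : p_j \le \alpha \hat{k}/m\}$. -/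
open MeasureTheory Finset
open scoped Classical

/-- e-BH applied to the e-values obtained by thresholding p-values
at the BH-threshold `α k̂ / m` recovers exactly the BH rejection set. -/
theorem stmt13 (m : ℕ) (hm : 1 ≤ m) (α : ℝ) (hα : 0 < α) (hα1 : α < 1)
    (p : Fin m → ℝ) (hp : ∀ j, 0 < p j ∧ p j ≤ 1) :
    let khat := sSup {k | k ≤ m ∧
      k ≤ (Finset.univ.filter (fun j => p j ≤ α * k / m)).card}
    ebhR m α (fun j => if p j ≤ α * khat / m then (m : ℝ) / (α * khat) else 0)
      = Finset.univ.filter (fun j => p j ≤ α * khat / m) := by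
  intro khat
  have hmpos : (0:ℝ) < m := by exact_mod_cast hm
  have hbdd : BddAbove {k | k ≤ m ∧
      k ≤ (Finset.univ.filter (fun j => p j ≤ α * k / m)).card} :=
    ⟨m, fun k hk => hk.1⟩
  have hne : Set.Nonempty {k | k ≤ m ∧
      k ≤ (Finset.univ.filter (fun j => p j ≤ α * k / m)).card} :=
    ⟨0, Nat.zero_le _, Nat.zero_le _⟩
  have hmem : khat ≤ m ∧
      khat ≤ (Finset.univ.filter (fun j => p j ≤ α * khat / m)).card :=
    Nat.sSup_mem hne hbdd
  by_cases hk0 : khat = 0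
  · -- degenerate case: no rejections on either side
    have hBH : (Finset.univ.filter (fun j => p j ≤ α * (khat:ℕ) / m)) = ∅ := by
      rw [Finset.filter_eq_empty_iff]
      intro j _
      rw [hk0]
      push_cast
      rw [mul_zero, zero_div]
      exact not_le.2 (hp j).1
    have he0 : (fun j => if p j ≤ α * (khat:ℕ) / m then (m : ℝ) / (α * khat) else 0)
        = fun _ => (0:ℝ) := by
      funext j
      rw [hk0]
      push_cast
      simp
    rw [he0, hBH]
    have hK0 : ebhK m α (fun _ => (0:ℝ)) = 0 := by
      have hbddT : BddAbove {k | k ≤ m ∧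
          k ≤ (Finset.univ.filter (fun j : Fin m => (m : ℝ) / (α * k) ≤ (0:ℝ))).card} :=
        ⟨m, fun k hk => hk.1⟩
      have hmemT := Nat.sSup_mem (s := {k | k ≤ m ∧
          k ≤ (Finset.univ.filter (fun j : Fin m => (m : ℝ) / (α * k) ≤ (0:ℝ))).card})
        ⟨0, Nat.zero_le _, Nat.zero_le _⟩ hbddT
      set K := sSup {k | k ≤ m ∧
          k ≤ (Finset.univ.filter (fun j : Fin m => (m : ℝ) / (α * k) ≤ (0:ℝ))).card} with hK
      by_contra hne0
      have hK1 : 1 ≤ K := Nat.one_le_iff_ne_zero.2 hne0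
      have hKpos : (0:ℝ) < (m:ℝ) / (α * K) := by
        apply div_pos hmpos
        apply mul_pos hα
        exact_mod_cast hK1
      have : (Finset.univ.filter (fun j : Fin m => (m : ℝ) / (α * K) ≤ (0:ℝ))) = ∅ := by
        rw [Finset.filter_eq_empty_iff]
        intro j _
        exact not_le.2 hKpos
      have h2 := hmemT.2
      rw [this] at h2
      simp at h2
      exact hne0 h2
    rw [ebhR, hK0]
    simp
  · -- main case: khat ≥ 1
    have hk1 : 1 ≤ khat := Nat.one_le_iff_ne_zero.2 hk0
    have hkR : (0:ℝ) < (khat:ℝ) := by exact_mod_cast hk1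
    have hthr : (0:ℝ) < (m:ℝ) / (α * khat) := div_pos hmpos (mul_pos hα hkR)
    set e := fun j => if p j ≤ α * (khat:ℕ) / m then (m : ℝ) / (α * khat) else 0 with he
    have hfe : ∀ j, ((m:ℝ) / (α * khat) ≤ e j) ↔ p j ≤ α * khat / m := by
      intro j
      by_cases h : p j ≤ α * (khat:ℕ) / m
      · simp [he, h]
      · simp only [he, if_neg h]
        exact iff_of_false (not_le.2 hthr) h
    have hbddT : BddAbove {k | k ≤ m ∧
        k ≤ (Finset.univ.filter (fun j => (m : ℝ) / (α * k) ≤ e j)).card} :=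
      ⟨m, fun k hk => hk.1⟩
    have hkhatT : khat ∈ {k | k ≤ m ∧
        k ≤ (Finset.univ.filter (fun j => (m : ℝ) / (α * k) ≤ e j)).card} := by
      refine ⟨hmem.1, ?_⟩
      have : (Finset.univ.filter (fun j => (m : ℝ) / (α * khat) ≤ e j))
          = (Finset.univ.filter (fun j => p j ≤ α * khat / m)) := by
        apply Finset.filter_congr
        intro j _
        simp [hfe j]
      rw [this]
      exact hmem.2
    have hKge : khat ≤ ebhK m α e := le_csSup hbddT hkhatT
    have hKmem : ebhK m α e ∈ {k | k ≤ m ∧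
        k ≤ (Finset.univ.filter (fun j => (m : ℝ) / (α * k) ≤ e j)).card} :=
      Nat.sSup_mem ⟨khat, hkhatT⟩ hbddT
    set K := ebhK m α e with hKdef
    have hK1 : 1 ≤ K := le_trans hk1 hKge
    have hKR : (0:ℝ) < (K:ℝ) := by exact_mod_cast hK1
    have hKthr : (0:ℝ) < (m:ℝ) / (α * K) := div_pos hmpos (mul_pos hα hKR)
    have hKle : K ≤ khat := by
      apply le_csSup hbdd
      refine ⟨hKmem.1, ?_⟩
      refine le_trans hKmem.2 (Finset.card_le_card ?_)
      intro j hj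
      rw [Finset.mem_filter] at hj ⊢
      refine ⟨hj.1, ?_⟩
      have hje : (m:ℝ) / (α * K) ≤ e j := hj.2
      have hej : e j = (m:ℝ) / (α * khat) ∧ p j ≤ α * khat / m := by
        by_cases h : p j ≤ α * (khat:ℕ) / m
        · exact ⟨by simp [he, h], h⟩
        · exfalso
          have : e j = 0 := by simp [he, h]
          rw [this] at hje
          exact absurd hje (not_le.2 hKthr)
      refine le_trans hej.2 ?_
      have hc : (khat:ℝ) ≤ (K:ℝ) := by exact_mod_cast hKge
      gcongr
    have hKeq : K = khat := le_antisymm hKle hKge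
    rw [ebhR]
    rw [if_neg (by rw [← hKdef, hKeq]; exact hk0)]
    rw [← hKdef, hKeq]
    apply Finset.filter_congr
    intro j _
    simp [hfe j]
end

section
/- Let $e_1, \dots, e_m \ge 0$, $\alpha \in (0,1)$, and let $\mathcal{R}$ be the e-BH rejection set at level $\alpha$ with $k^* = |\mathcal{R}|$. Then for every $j \in \mathcal{R}$, $e_j \ge \frac{m}{\alpha |\mathcal{R}|}$, and therefore $\frac{\#(\mathcal{H}_0 \cap \mathcal{R})}{\max(|\mathcal{R}|,1)} \le \frac{\alpha}{m} \sum_{j \in \mathcal{H}_0} e_j$ holds pointwise for any subset $\mathcal{H}_0 \subseteq \{1,\dots,m\}$. -/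
/-!
Since `k* ≤ |R|`, every rejected `e_j` clears `m / (α k*) ≥ m / (α |R|)`, i.e. `R` is
self-consistent. For a self-consistent `R ≠ ∅` this gives
`1 ≤ (α |R| / m) e_j` for `j ∈ R`, and summing over `H₀ ∩ R` bounds `#(H₀ ∩ R) / |R|`.
-/

open MeasureTheory Finset
open scoped Classical

def SelfConsistent {ι : Type*} [Fintype ι] (α : ℝ) (e : ι → ℝ) (R : Finset ι) : Prop :=
  ∀ j ∈ R, (Fintype.card ι : ℝ) / (α * #R) ≤ e j

theorem SelfConsistent.card_inter_div_le {ι : Type*} [Fintype ι] [DecidableEq ι] {α : ℝ}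
    {e : ι → ℝ} {R : Finset ι} (hR : SelfConsistent α e R) (hα : 0 < α) (H : Finset ι)
    (he : ∀ j ∈ H, 0 ≤ e j) :
    (#(H ∩ R) : ℝ) / max (#R : ℝ) 1 ≤ α / Fintype.card ι * ∑ j ∈ H, e j := by
  have hsum : 0 ≤ ∑ j ∈ H, e j := sum_nonneg he
  rcases R.eq_empty_or_nonempty with rfl | hne
  · simp only [inter_empty, card_empty, Nat.cast_zero, zero_div]
    positivity
  have hcard : (0 : ℝ) < #R := by exact_mod_cast hne.card_pos
  have hM : (0 : ℝ) < Fintype.card ι := by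
    obtain ⟨j, -⟩ := hne
    exact_mod_cast Fintype.card_pos_iff.mpr ⟨j⟩
  have hlower : #(H ∩ R) * ((Fintype.card ι : ℝ) / (α * #R)) ≤ ∑ j ∈ H, e j :=
    calc #(H ∩ R) * ((Fintype.card ι : ℝ) / (α * #R))
        = ∑ j ∈ H ∩ R, (Fintype.card ι : ℝ) / (α * #R) := by rw [sum_const, nsmul_eq_mul]
      _ ≤ ∑ j ∈ H ∩ R, e j := sum_le_sum fun j hj => hR j (mem_inter.mp hj).2
      _ ≤ ∑ j ∈ H, e j :=
          sum_le_sum_of_subset_of_nonneg inter_subset_left fun j hj _ => he j hj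
  rw [max_eq_left (by exact_mod_cast hne.card_pos)]
  calc (#(H ∩ R) : ℝ) / #R
      = α / Fintype.card ι * (#(H ∩ R) * ((Fintype.card ι : ℝ) / (α * #R))) := by
        field_simp
    _ ≤ α / Fintype.card ι * ∑ j ∈ H, e j := by gcongr

theorem ebhK_le_card_filter (m : ℕ) (α : ℝ) (e : Fin m → ℝ) :
    ebhK m α e ≤ #(univ.filter fun j => (m : ℝ) / (α * ebhK m α e) ≤ e j) :=
  (Nat.sSup_mem (s := {k | k ≤ m ∧ k ≤ #(univ.filter fun j => (m : ℝ) / (α * k) ≤ e j)})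
    ⟨0, by simp⟩ ⟨m, fun _ hk => hk.1⟩).2

theorem ebhK_le_card_ebhR (m : ℕ) (α : ℝ) (e : Fin m → ℝ) :
    ebhK m α e ≤ #(ebhR m α e) := by
  by_cases hk : ebhK m α e = 0
  · simp [hk]
  · rw [ebhR, if_neg hk]
    exact ebhK_le_card_filter m α e

theorem selfConsistent_ebhR (m : ℕ) {α : ℝ} (hα : 0 < α) (e : Fin m → ℝ) :
    SelfConsistent α e (ebhR m α e) := by
  intro j hj
  have hk : ebhK m α e ≠ 0 := fun hk => by simp [ebhR, hk] at hj
  rw [ebhR, if_neg hk, mem_filter] at hj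
  have hkR : (ebhK m α e : ℝ) ≤ #(ebhR m α e) := by exact_mod_cast ebhK_le_card_ebhR m α e
  have hkpos : (0 : ℝ) < ebhK m α e := by exact_mod_cast Nat.pos_of_ne_zero hk
  rw [Fintype.card_fin]
  calc (m : ℝ) / (α * #(ebhR m α e)) ≤ m / (α * ebhK m α e) := by gcongr
    _ ≤ e j := hj.2

theorem stmt15_general (m : ℕ) (α : ℝ) (hα : 0 < α)
    (e : Fin m → ℝ) (he : ∀ j, 0 ≤ e j) (H0 : Finset (Fin m)) :
    (∀ j ∈ ebhR m α e, (m : ℝ) / (α * ((ebhR m α e).card : ℝ)) ≤ e j) ∧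
    ((H0 ∩ ebhR m α e).card : ℝ) / max ((ebhR m α e).card : ℝ) 1
      ≤ α / m * ∑ j ∈ H0, e j := by
  have hR := selfConsistent_ebhR m hα e
  have hfdp := hR.card_inter_div_le hα H0 fun j _ => he j
  rw [Fintype.card_fin] at hfdp
  exact ⟨by simpa [SelfConsistent] using hR, hfdp⟩

/-- every e-BH rejection clears the threshold `m/(α|R|)`, and the
false discovery proportion is pointwise bounded by `(α/m) ∑_{j ∈ H0} e_j`. -/
theorem stmt15 (m : ℕ) (α : ℝ) (hα : 0 < α) (hα1 : α < 1)
    (e : Fin m → ℝ) (he : ∀ j, 0 ≤ e j) (H0 : Finset (Fin m)) :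
    (∀ j ∈ ebhR m α e, (m : ℝ) / (α * ((ebhR m α e).card : ℝ)) ≤ e j) ∧
    ((H0 ∩ ebhR m α e).card : ℝ) / max ((ebhR m α e).card : ℝ) 1
      ≤ α / m * ∑ j ∈ H0, e j :=
  stmt15_general m α hα e he H0
end

section
/- Let $(V_1, \dots, V_{n+1})$ be exchangeable real-valued random variables whose values are almost surely distinct, and let $t$ be a constant. Then $\mathbb{E}\left[\frac{\mathbf{1}\{V_{n+1} \ge t\}}{1 + \sum_{i=1}^n \mathbf{1}\{V_i \ge t\}}\right] = \frac{1}{n+1}\,\mathbb{P}\left(\exists\, i \in \{1,\dots,n+1\} : V_i \ge t\right) \le \frac{1}{n+1}. -/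
/-!
Let `S = {i | t ≤ V i}`. The ratio in the statement is the share `1 / #S` that the test
coordinate receives when it lies in `S`. Exchangeability makes the expected share the same for
every coordinate, while deterministically the shares of all `n + 1` coordinates add up to
`1{S ≠ ∅}`; hence `n + 1` times the expected share is `ℙ(S ≠ ∅) ≤ 1`.
-/

open MeasureTheory Finset

section ExceedShare

variable {ι : Type*} [Fintype ι]

/-- For `t ≤ v k` this is `1 / (1 + #{i ≠ k | t ≤ v i})`, the conformal e-value ratio with
test coordinate `k`. -/
noncomputable def exceedShare (t : ℝ) (v : ι → ℝ) (k : ι) : ℝ :=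
  if t ≤ v k then (#{i | t ≤ v i} : ℝ)⁻¹ else 0

theorem exceedShare_comp_perm (t : ℝ) (v : ι → ℝ) (π : Equiv.Perm ι) (k : ι) :
    exceedShare t (v ∘ π) k = exceedShare t v (π k) := by
  classical
  have hcard : #{i | t ≤ v (π i)} = #{i | t ≤ v i} := card_equiv π (by simp)
  simp only [exceedShare, Function.comp_apply, hcard]

theorem sum_exceedShare (t : ℝ) (v : ι → ℝ) :
    ∑ k, exceedShare t v k = if ∃ i, t ≤ v i then 1 else 0 := by
  classical
  simp only [exceedShare]
  rw [← sum_filter, sum_const, nsmul_eq_mul]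
  split_ifs with h
  · obtain ⟨i, hi⟩ := h
    exact mul_inv_cancel₀ (Nat.cast_ne_zero.mpr (card_ne_zero_of_mem (by simpa using hi)))
  · push Not at h
    simp [filter_false_of_mem fun i _ => not_le.mpr (h i)]

theorem exceedShare_nonneg (t : ℝ) (v : ι → ℝ) (k : ι) : 0 ≤ exceedShare t v k := by
  unfold exceedShare; split_ifs <;> positivity

theorem exceedShare_le_one (t : ℝ) (v : ι → ℝ) (k : ι) : exceedShare t v k ≤ 1 := by
  unfold exceedShare; split_ifs
  exacts [Nat.cast_inv_le_one _, zero_le_one]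

theorem measurable_exceedShare (t : ℝ) (k : ι) :
    Measurable fun v : ι → ℝ => exceedShare t v k := by
  classical
  simp_rw [exceedShare, card_filter, Nat.cast_sum, Nat.cast_ite, Nat.cast_one, Nat.cast_zero]
  have hle : ∀ i, MeasurableSet {v : ι → ℝ | t ≤ v i} := fun i =>
    measurableSet_le measurable_const (measurable_pi_apply i)
  exact Measurable.ite (hle k) (Finset.measurable_sum _ fun i _ =>
    Measurable.ite (hle i) measurable_const measurable_const).inv measurable_const

end ExceedShare

section Exchangeable

variable {Ω ι : Type*} [MeasurableSpace Ω]

def Exchangeable {β : Type*} [MeasurableSpace β] (μ : Measure Ω) (V : Ω → ι → β) : Prop :=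
  ∀ π : Equiv.Perm ι, μ.map (fun ω => V ω ∘ π) = μ.map V

theorem Exchangeable.integral_comp_perm {β : Type*} [MeasurableSpace β] {μ : Measure Ω}
    {V : Ω → ι → β} (hexch : Exchangeable μ V) (hV : Measurable V) (π : Equiv.Perm ι)
    {g : (ι → β) → ℝ} (hg : Measurable g) :
    ∫ ω, g (V ω ∘ π) ∂μ = ∫ ω, g (V ω) ∂μ := by
  have hVπ : Measurable fun ω => V ω ∘ π :=
    measurable_pi_lambda _ fun i => (measurable_pi_apply (π i)).comp hV
  rw [← integral_map hVπ.aemeasurable hg.aestronglyMeasurable, hexch π,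
    integral_map hV.aemeasurable hg.aestronglyMeasurable]

variable [Fintype ι] {μ : Measure Ω} {V : Ω → ι → ℝ}

theorem Exchangeable.integral_exceedShare_eq (hexch : Exchangeable μ V) (hV : Measurable V)
    (t : ℝ) (j k : ι) :
    ∫ ω, exceedShare t (V ω) j ∂μ = ∫ ω, exceedShare t (V ω) k ∂μ := by
  classical
  calc ∫ ω, exceedShare t (V ω) j ∂μ = ∫ ω, exceedShare t (V ω ∘ Equiv.swap j k) k ∂μ := by
        simp only [exceedShare_comp_perm, Equiv.swap_apply_right]
    _ = ∫ ω, exceedShare t (V ω) k ∂μ :=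
        hexch.integral_comp_perm hV _ (measurable_exceedShare t k)

theorem Exchangeable.card_mul_integral_exceedShare [IsFiniteMeasure μ]
    (hexch : Exchangeable μ V) (hV : Measurable V) (t : ℝ) (k : ι) :
    Fintype.card ι * ∫ ω, exceedShare t (V ω) k ∂μ = μ.real {ω | ∃ i, t ≤ V ω i} := by
  have hint : ∀ j, Integrable (fun ω => exceedShare t (V ω) j) μ := fun j =>
    .of_bound ((measurable_exceedShare t j).comp hV).aestronglyMeasurable 1
      (.of_forall fun ω => by
        rw [Real.norm_of_nonneg (exceedShare_nonneg _ _ _)]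
        exact exceedShare_le_one _ _ _)
  have hmeas : MeasurableSet {ω | ∃ i, t ≤ V ω i} := by
    simp only [Set.ofPred_exists]
    exact .iUnion fun i => measurableSet_le measurable_const ((measurable_pi_apply i).comp hV)
  calc Fintype.card ι * ∫ ω, exceedShare t (V ω) k ∂μ
      = ∑ j, ∫ ω, exceedShare t (V ω) j ∂μ := by
        simp [hexch.integral_exceedShare_eq hV t _ k]
    _ = ∫ ω, ∑ j, exceedShare t (V ω) j ∂μ := (integral_finsetSum _ fun j _ => hint j).symm
    _ = ∫ ω, {ω | ∃ i, t ≤ V ω i}.indicator 1 ω ∂μ := by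
        simp only [sum_exceedShare, Set.indicator_apply, Set.mem_ofPred_eq, Pi.one_apply]
    _ = μ.real {ω | ∃ i, t ≤ V ω i} := integral_indicator_one hmeas

end Exchangeable

theorem ite_div_one_add_sum_castSucc_eq_exceedShare {n : ℕ} (t : ℝ) (v : Fin (n + 1) → ℝ) :
    (if t ≤ v (Fin.last n) then (1 : ℝ) else 0) /
        (1 + ∑ i : Fin n, (if t ≤ v i.castSucc then (1 : ℝ) else 0))
      = exceedShare t v (Fin.last n) := by
  unfold exceedShare
  split_ifs with h
  · rw [card_filter, Nat.cast_sum, Fin.sum_univ_castSucc]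
    simp [h, add_comm]
  · exact zero_div _

theorem stmt16_general {Ω : Type*} [MeasurableSpace Ω] (μ : Measure Ω) [IsProbabilityMeasure μ]
    (n : ℕ) (V : Ω → Fin (n + 1) → ℝ) (hV : Measurable V)
    (hexch : ∀ π : Equiv.Perm (Fin (n + 1)),
      Measure.map (fun ω => V ω ∘ π) μ = Measure.map V μ)
    (t : ℝ) :
    (∫ ω, (if t ≤ V ω (Fin.last n) then (1 : ℝ) else 0) /
        (1 + ∑ i : Fin n, (if t ≤ V ω i.castSucc then (1 : ℝ) else 0)) ∂μ
      = (1 / (n + 1 : ℝ)) * (μ {ω | ∃ i : Fin (n + 1), t ≤ V ω i}).toReal) ∧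
    ∫ ω, (if t ≤ V ω (Fin.last n) then (1 : ℝ) else 0) /
        (1 + ∑ i : Fin n, (if t ≤ V ω i.castSucc then (1 : ℝ) else 0)) ∂μ
      ≤ 1 / (n + 1 : ℝ) := by
  have hcard := Exchangeable.card_mul_integral_exceedShare hexch hV t (Fin.last n)
  rw [Fintype.card_fin, Nat.cast_add_one] at hcard
  simp_rw [ite_div_one_add_sum_castSucc_eq_exceedShare]
  have heq : ∫ ω, exceedShare t (V ω) (Fin.last n) ∂μ
      = 1 / (n + 1 : ℝ) * (μ {ω | ∃ i : Fin (n + 1), t ≤ V ω i}).toReal := by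
    rw [← measureReal_def, ← hcard]
    field_simp
  refine ⟨heq, heq ▸ mul_le_of_le_one_right (by positivity) measureReal_le_one⟩

/-- for exchangeable a.s.-distinct scores and a constant threshold
`t`, the expected conformal e-value term equals `ℙ(∃ i, V_i ≥ t)/(n+1)`, and is
at most `1/(n+1)`. -/
theorem stmt16 {Ω : Type*} [MeasurableSpace Ω] (μ : Measure Ω) [IsProbabilityMeasure μ]
    (n : ℕ) (V : Ω → Fin (n + 1) → ℝ) (hV : Measurable V)
    (hexch : ∀ π : Equiv.Perm (Fin (n + 1)),
      Measure.map (fun ω => V ω ∘ π) μ = Measure.map V μ)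
    (hdist : ∀ᵐ ω ∂μ, Function.Injective (V ω))
    (t : ℝ) :
    (∫ ω, (if t ≤ V ω (Fin.last n) then (1 : ℝ) else 0) /
        (1 + ∑ i : Fin n, (if t ≤ V ω i.castSucc then (1 : ℝ) else 0)) ∂μ
      = (1 / (n + 1 : ℝ)) * (μ {ω | ∃ i : Fin (n + 1), t ≤ V ω i}).toReal) ∧
    ∫ ω, (if t ≤ V ω (Fin.last n) then (1 : ℝ) else 0) /
        (1 + ∑ i : Fin n, (if t ≤ V ω i.castSucc then (1 : ℝ) else 0)) ∂μ
      ≤ 1 / (n + 1 : ℝ) :=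
  stmt16_general μ n V hV hexch t
end
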